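/- arXiv:1606.08995 — 7 statements merged into one kernel-verified Lean document; each statement's English description precedes it below -/
import Mathlib

section
/- Let M be a gcd-monoid and let a, b, a', b', c in M satisfy a·b' = b·a'. If the left gcd of a and b is 1 and the left gcd of a' and c is 1, then the left gcd of a and b·c is 1. -/
/-!
The common divisor `x` of `a` and `b * c` and the element `b` have the common right multiple
`b * c`, hence a right lcm `b * y`. Both `b * c` and `a * b' = b * a'` are common right multiples
of `x` and `b`, so `y` left-divides `c` and `a'`, forcing `y = 1`. Thus `x` left-divides `b`, and
being a common left divisor of `a` and `b` it is trivial.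
-/

universe u

/-- `a` left-divides `b`. -/
def LeftDvd {M : Type*} [Monoid M] (a b : M) : Prop := ∃ x, a * x = b

/-- `a` right-divides `b`. -/
def RightDvd' {M : Type*} [Monoid M] (a b : M) : Prop := ∃ x, x * a = b

/-- `m` is a right lcm of `a` and `b` (least upper bound for left divisibility). -/
def IsRightLcm {M : Type*} [Monoid M] (a b m : M) : Prop :=
  LeftDvd a m ∧ LeftDvd b m ∧ ∀ c, LeftDvd a c → LeftDvd b c → LeftDvd m c

/-- `m` is a left lcm of `a` and `b` (least upper bound for right divisibility). -/
def IsLeftLcm {M : Type*} [Monoid M] (a b m : M) : Prop :=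
  RightDvd' a m ∧ RightDvd' b m ∧ ∀ c, RightDvd' a c → RightDvd' b c → RightDvd' m c

/-- `g` is a left gcd of `a` and `b` (greatest lower bound for left divisibility). -/
def IsLeftGcd {M : Type*} [Monoid M] (a b g : M) : Prop :=
  LeftDvd g a ∧ LeftDvd g b ∧ ∀ x, LeftDvd x a → LeftDvd x b → LeftDvd x g

/-- `g` is a right gcd of `a` and `b` (greatest lower bound for right divisibility). -/
def IsRightGcd {M : Type*} [Monoid M] (a b g : M) : Prop :=
  RightDvd' g a ∧ RightDvd' g b ∧ ∀ x, RightDvd' x a → RightDvd' x b → RightDvd' x g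

/-- A quadruple admits a central cross. -/
def CentralCross {M : Type*} [Monoid M] (a₁ a₂ a₃ a₄ : M) : Prop :=
  ∃ x₁ x₂ x₃ x₄ : M, a₁ = x₁ * x₂ ∧ a₂ = x₃ * x₂ ∧ a₃ = x₃ * x₄ ∧ a₄ = x₁ * x₄

namespace LeftDvd

variable {M : Type*}

theorem one_left [Monoid M] (a : M) : LeftDvd 1 a := ⟨a, one_mul a⟩

theorem mul_right [Monoid M] (a b : M) : LeftDvd a (a * b) := ⟨b, rfl⟩

theorem trans [Monoid M] {a b c : M} : LeftDvd a b → LeftDvd b c → LeftDvd a c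
  | ⟨x, hx⟩, ⟨y, hy⟩ => ⟨x * y, by rw [← mul_assoc, hx, hy]⟩

theorem of_mul_left [LeftCancelMonoid M] {b y z : M} : LeftDvd (b * y) (b * z) → LeftDvd y z
  | ⟨s, hs⟩ => ⟨s, mul_left_cancel (by rw [← mul_assoc, hs])⟩

end LeftDvd

theorem eq_one_of_leftDvd_one {M : Type*} [Monoid M] (hunit : ∀ a b : M, a * b = 1 → a = 1)
    {x : M} (hx : LeftDvd x 1) : x = 1 :=
  let ⟨r, hr⟩ := hx
  hunit x r hr

theorem eq_one_of_rightDvd_cofactors {M : Type*} [RightCancelMonoid M]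
    (hunit : ∀ a b : M, a * b = 1 → a = 1) {p₀ q₀ g e : M}
    (hg : IsRightGcd (p₀ * g) (q₀ * g) g) (hp : RightDvd' e p₀) (hq : RightDvd' e q₀) :
    e = 1 := by
  obtain ⟨u, rfl⟩ := hp
  obtain ⟨v, rfl⟩ := hq
  obtain ⟨w, hw⟩ := hg.2.2 (e * g) ⟨u, by rw [mul_assoc]⟩ ⟨v, by rw [mul_assoc]⟩
  have hwe : w * e = 1 := mul_right_cancel (b := g) (by rw [mul_assoc, hw, one_mul])
  rwa [hunit w e hwe, one_mul] at hwe

theorem exists_isRightLcm_of_leftDvd {M : Type*} [CancelMonoid M]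
    (hunit : ∀ a b : M, a * b = 1 → a = 1)
    (hgcdL : ∀ a b : M, ∃ g, IsLeftGcd a b g)
    (hgcdR : ∀ a b : M, ∃ g, IsRightGcd a b g)
    {a b m : M} (ham : LeftDvd a m) (hbm : LeftDvd b m) :
    ∃ l, IsRightLcm a b l := by
  obtain ⟨p, hp⟩ := ham
  obtain ⟨q, hq⟩ := hbm
  obtain ⟨g, ⟨p₀, rfl⟩, ⟨q₀, rfl⟩, hg⟩ := hgcdR p q
  have hgcd : IsRightGcd (p₀ * g) (q₀ * g) g := ⟨⟨p₀, rfl⟩, ⟨q₀, rfl⟩, hg⟩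
  -- dividing the common multiple `m` on the right by `g` gives the candidate lcm `a * p₀`
  have heq : a * p₀ = b * q₀ :=
    mul_right_cancel (b := g) (by rw [mul_assoc, mul_assoc, hp, hq])
  refine ⟨a * p₀, .mul_right a p₀, heq ▸ .mul_right b q₀, fun n han hbn => ?_⟩
  -- `a * p₀ = d * e` for the left gcd `d` of `a * p₀` and `n`, and `e` right-divides `p₀`, `q₀`
  obtain ⟨d, ⟨e, hde⟩, hdn, hd⟩ := hgcdL (a * p₀) n
  obtain ⟨u, rfl⟩ := hd a (.mul_right a p₀) han
  obtain ⟨v, hv⟩ := hd b (heq ▸ .mul_right b q₀) hbn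
  have hue : u * e = p₀ := mul_left_cancel (by rw [← mul_assoc, hde])
  have hve : v * e = q₀ := mul_left_cancel (by rw [← mul_assoc, hv, hde, heq])
  rw [← hde, eq_one_of_rightDvd_cofactors hunit hgcd ⟨u, hue⟩ ⟨v, hve⟩, mul_one]
  exact hdn

theorem stmt_1 {M : Type*} [CancelMonoid M]
    (hunit : ∀ a b : M, a * b = 1 → a = 1)
    (hgcdL : ∀ a b : M, ∃ g, IsLeftGcd a b g)
    (hgcdR : ∀ a b : M, ∃ g, IsRightGcd a b g)
    (a b a' b' c : M) (h : a * b' = b * a')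
    (h1 : IsLeftGcd a b 1) (h2 : IsLeftGcd a' c 1) :
    IsLeftGcd a (b * c) 1 := by
  refine ⟨.one_left a, .one_left (b * c), fun x hxa hxbc => ?_⟩
  obtain ⟨l, hxl, ⟨y, rfl⟩, hl⟩ :=
    exists_isRightLcm_of_leftDvd hunit hgcdL hgcdR hxbc (.mul_right b c)
  have hxba' : LeftDvd x (b * a') := h ▸ hxa.trans (.mul_right a b')
  have hya' : LeftDvd y a' := (hl _ hxba' (.mul_right b a')).of_mul_left
  have hyc : LeftDvd y c := (hl _ hxbc (.mul_right b c)).of_mul_left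
  have hy : y = 1 := eq_one_of_leftDvd_one hunit (h2.2.2 y hya' hyc)
  rw [hy, mul_one] at hxl
  exact h1.2.2 x hxa hxl
end

section
/- Let M be a gcd-monoid and a, b, c, d in M satisfy a·d = b·c. Then a·d is the right lcm of a and b if and only if the right gcd of c and d is 1. -/
universe u

/-!
If `ad = bc` and `g` is a common right divisor of `c` and `d`, say `c = c₁g` and `d = d₁g`,
then `ad₁ = bc₁` is a common right multiple of `a` and `b` of which `ad` is a right multiple
by the factor `g`. So `ad` is the right lcm exactly when every such `g` is trivial. For the
converse direction one compares `ad` with an arbitrary common multiple `m` through the left gcd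
`g` of `ad` and `m`: it is again a common multiple of `a` and `b` below `ad`, and the factor
from `g` up to `ad` right-divides both `c` and `d`, hence is invertible.
-/

theorem IsRightLcm.isRightGcd_one {M : Type*} [CancelMonoid M] {a b c d : M}
    (h : a * d = b * c) (hlcm : IsRightLcm a b (a * d)) : IsRightGcd c d 1 := by
  refine ⟨⟨c, mul_one c⟩, ⟨d, mul_one d⟩, ?_⟩
  rintro g ⟨c₁, rfl⟩ ⟨d₁, rfl⟩
  have hcm : b * c₁ = a * d₁ :=
    mul_right_cancel (b := g) (by rw [mul_assoc, mul_assoc, ← h])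
  obtain ⟨z, hz⟩ := hlcm.2.2 (a * d₁) ⟨d₁, rfl⟩ ⟨c₁, hcm⟩
  have hgz : g * z = 1 :=
    mul_left_cancel (a := a * d₁) (by rw [← mul_assoc, mul_assoc a d₁ g, hz, mul_one])
  exact ⟨z, mul_eq_one_comm.mp hgz⟩

theorem LeftDvd.mul_unit_left {M : Type*} [Monoid M] {g s m : M} (hs : IsUnit s)
    (h : LeftDvd g m) : LeftDvd (g * s) m := by
  obtain ⟨t, rfl⟩ := h
  exact ⟨↑hs.unit⁻¹ * t, by rw [mul_assoc, ← mul_assoc s, hs.mul_val_inv, one_mul]⟩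

theorem isRightLcm_of_isRightGcd_one {M : Type*} [Monoid M] [IsLeftCancelMul M]
    (hgcdL : ∀ a b : M, ∃ g, IsLeftGcd a b g) {a b c d : M} (h : a * d = b * c)
    (hcd : IsRightGcd c d 1) : IsRightLcm a b (a * d) := by
  refine ⟨⟨d, rfl⟩, ⟨c, h.symm⟩, ?_⟩
  rintro m ham hbm
  obtain ⟨g, ⟨s, hgs⟩, hgm, hg⟩ := hgcdL (a * d) m
  obtain ⟨x, rfl⟩ := hg a ⟨d, rfl⟩ ham
  obtain ⟨y, hy⟩ := hg b ⟨c, h.symm⟩ hbm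
  have hd : x * s = d := mul_left_cancel (by rw [← mul_assoc, hgs])
  have hc : y * s = c := mul_left_cancel (by rw [← mul_assoc, hy, hgs, h])
  obtain ⟨w, hws⟩ := hcd.2.2 s ⟨y, hc⟩ ⟨x, hd⟩
  rw [← hgs]
  exact hgm.mul_unit_left (.of_mul_eq_one_right w hws)

theorem stmt_2_general {M : Type*} [CancelMonoid M]
    (hgcdL : ∀ a b : M, ∃ g, IsLeftGcd a b g)
    (a b c d : M) (h : a * d = b * c) :
    IsRightLcm a b (a * d) ↔ IsRightGcd c d 1 :=
  ⟨IsRightLcm.isRightGcd_one h, isRightLcm_of_isRightGcd_one hgcdL h⟩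

theorem stmt_2 {M : Type*} [CancelMonoid M]
    (hunit : ∀ a b : M, a * b = 1 → a = 1)
    (hgcdL : ∀ a b : M, ∃ g, IsLeftGcd a b g)
    (hgcdR : ∀ a b : M, ∃ g, IsRightGcd a b g)
    (a b c d : M) (h : a * d = b * c) :
    IsRightLcm a b (a * d) ↔ IsRightGcd c d 1 :=
  stmt_2_general hgcdL a b c d h
end

section
/- Let M be a gcd-monoid that admits a length function λ : M → ℕ satisfying λ(ab) = λ(a) + λ(b) for all a, b and λ(a) > 0 for a ≠ 1. Then for every a in M, if the image of a in the enveloping group U(M) equals the identity, then a = 1. -/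
universe u

/-!
An additive length function is a morphism from `M` to the group `ℤ`, so it factors through
the enveloping group: if `ι a = 1` then `λ(a) = 0`, and positivity of `λ` forces `a = 1`.
-/

section LengthFunction

variable {M : Type*} [Monoid M] {lam : M → ℕ}

theorem length_one (hadd : ∀ a b : M, lam (a * b) = lam a + lam b) : lam 1 = 0 := by
  have h := hadd 1 1
  rw [one_mul] at h
  omega

def lengthHom (lam : M → ℕ) (hadd : ∀ a b : M, lam (a * b) = lam a + lam b) :
    M →* Multiplicative ℤ where
  toFun m := Multiplicative.ofAdd (lam m : ℤ)
  map_one' := by simp [length_one hadd]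
  map_mul' a b := by simp [hadd, ofAdd_add]

theorem eq_one_of_length_eq_zero (hpos : ∀ a : M, a ≠ 1 → 0 < lam a) {a : M}
    (h : lam a = 0) : a = 1 := by
  by_contra hne
  exact (hpos a hne).ne' h

end LengthFunction

theorem MonoidHom.apply_eq_one_of_comp_eq {M G H : Type*} [Monoid M] [Monoid G] [Monoid H]
    {ι : M →* G} {f : M →* H} {φ : G →* H} (hφ : φ.comp ι = f) {a : M} (ha : ι a = 1) :
    f a = 1 := by
  rw [← hφ, MonoidHom.comp_apply, ha, map_one]

theorem stmt_3_general {M : Type*} [CancelMonoid M] {G : Type u} [Group G]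
    (ι : M →* G)
    (hUniv : ∀ {H : Type u} [Group H] (f : M →* H), ∃! φ : G →* H, φ.comp ι = f)
    (lam : M → ℕ)
    (hadd : ∀ a b : M, lam (a * b) = lam a + lam b)
    (hpos : ∀ a : M, a ≠ 1 → 0 < lam a)
    (a : M) (ha : ι a = 1) : a = 1 := by
  let f : M →* ULift.{u} (Multiplicative ℤ) :=
    MulEquiv.ulift.symm.toMonoidHom.comp (lengthHom lam hadd)
  obtain ⟨φ, hφ, -⟩ := hUniv f
  have hfa : lengthHom lam hadd a = 1 :=
    (map_eq_one_iff _ MulEquiv.ulift.symm.injective).mp (MonoidHom.apply_eq_one_of_comp_eq hφ ha)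
  exact eq_one_of_length_eq_zero hpos (by simpa [lengthHom] using hfa)

theorem stmt_3 {M : Type*} [CancelMonoid M] {G : Type u} [Group G]
    (hunit : ∀ a b : M, a * b = 1 → a = 1)
    (hgcdL : ∀ a b : M, ∃ g, IsLeftGcd a b g)
    (hgcdR : ∀ a b : M, ∃ g, IsRightGcd a b g)
    (ι : M →* G)
    (hUniv : ∀ {H : Type u} [Group H] (f : M →* H), ∃! φ : G →* H, φ.comp ι = f)
    (lam : M → ℕ)
    (hadd : ∀ a b : M, lam (a * b) = lam a + lam b)
    (hpos : ∀ a : M, a ≠ 1 → 0 < lam a)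
    (a : M) (ha : ι a = 1) : a = 1 :=
  stmt_3_general ι hUniv lam hadd hpos a ha
end

section
/- Let M be a gcd-monoid. Suppose that for all a, b, c, d in M with ι(a)·ι(b)⁻¹ = ι(c)·ι(d)⁻¹ in the enveloping group U(M) and with right gcd of a and b equal to 1 and right gcd of c and d equal to 1, one has a = c and b = d. Then for all a, b, c, d in M with ι(a)·ι(b)⁻¹ = ι(c)·ι(d)⁻¹ and right gcd of a and b equal to 1, a left-divides c and b left-divides d. -/
universe u

theorem IsRightGcd.one_of_mul_right {M : Type*} [Monoid M] [IsRightCancelMul M]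
    {a b g : M} (h : IsRightGcd (a * g) (b * g) g) : IsRightGcd a b 1 := by
  refine ⟨⟨a, mul_one a⟩, ⟨b, mul_one b⟩, ?_⟩
  rintro x ⟨u, rfl⟩ ⟨v, rfl⟩
  obtain ⟨w, hw⟩ := h.2.2 (x * g) ⟨u, (mul_assoc u x g).symm⟩ ⟨v, (mul_assoc v x g).symm⟩
  exact ⟨w, mul_right_cancel (b := g) (by rw [mul_assoc, hw, one_mul])⟩

theorem MonoidHom.map_mul_right_mul_inv {M G : Type*} [Monoid M] [Group G] (f : M →* G)
    (a b g : M) : f (a * g) * (f (b * g))⁻¹ = f a * (f b)⁻¹ := by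
  simp only [map_mul]
  group

theorem stmt_5_general {M : Type*} [CancelMonoid M] {G : Type u} [Group G]
    (hgcdR : ∀ a b : M, ∃ g, IsRightGcd a b g)
    (ι : M →* G)
    (huniq : ∀ a b c d : M, ι a * (ι b)⁻¹ = ι c * (ι d)⁻¹ →
      IsRightGcd a b 1 → IsRightGcd c d 1 → a = c ∧ b = d) :
    ∀ a b c d : M, ι a * (ι b)⁻¹ = ι c * (ι d)⁻¹ → IsRightGcd a b 1 →
      LeftDvd a c ∧ LeftDvd b d := by
  intro a b c d heq hab
  -- Divide `c` and `d` on the right by their right gcd to get the reduced form of the fraction.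
  obtain ⟨g, hg⟩ := hgcdR c d
  obtain ⟨⟨c', rfl⟩, ⟨d', rfl⟩, -⟩ := id hg
  rw [ι.map_mul_right_mul_inv] at heq
  obtain ⟨rfl, rfl⟩ := huniq a b c' d' heq hab hg.one_of_mul_right
  exact ⟨⟨g, rfl⟩, ⟨g, rfl⟩⟩

theorem stmt_5 {M : Type*} [CancelMonoid M] {G : Type u} [Group G]
    (hunit : ∀ a b : M, a * b = 1 → a = 1)
    (hgcdL : ∀ a b : M, ∃ g, IsLeftGcd a b g)
    (hgcdR : ∀ a b : M, ∃ g, IsRightGcd a b g)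
    (ι : M →* G)
    (hUniv : ∀ {H : Type u} [Group H] (f : M →* H), ∃! φ : G →* H, φ.comp ι = f)
    (huniq : ∀ a b c d : M, ι a * (ι b)⁻¹ = ι c * (ι d)⁻¹ →
      IsRightGcd a b 1 → IsRightGcd c d 1 → a = c ∧ b = d) :
    ∀ a b c d : M, ι a * (ι b)⁻¹ = ι c * (ι d)⁻¹ → IsRightGcd a b 1 →
      LeftDvd a c ∧ LeftDvd b d :=
  stmt_5_general hgcdR ι huniq
end

section
/- Let M be a gcd-monoid. If every quadruple (a,b,d,c) of elements of M with ι(a)·ι(b)⁻¹·ι(d)·ι(c)⁻¹ = 1 in the enveloping group U(M) admits a central cross, then: for all a, b, c in M with right gcd of a and b equal to 1, left gcd of b and c equal to 1, and ι(a)·ι(b)⁻¹·ι(c) lying in the image ι(M), one has b = 1. -/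
universe u

/-! A central cross `a = x₁x₂`, `b = x₃x₂`, `c = x₃x₄` for the quadruple `(a, b, c, d)` makes
`x₂` a common right divisor of `a, b` and `x₃` a common left divisor of `b, c`; coprimality
forces both to be `1`. -/

section CoprimeDivisors

variable {M : Type*} [Monoid M]

theorem IsRightGcd.eq_one_of_rightDvd' (hunit : ∀ a b : M, a * b = 1 → a = 1) {a b x : M}
    (hab : IsRightGcd a b 1) (hxa : RightDvd' x a) (hxb : RightDvd' x b) : x = 1 := by
  obtain ⟨y, hy⟩ := hab.2.2 x hxa hxb
  rwa [hunit y x hy, one_mul] at hy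

theorem IsLeftGcd.eq_one_of_leftDvd (hunit : ∀ a b : M, a * b = 1 → a = 1) {a b x : M}
    (hab : IsLeftGcd a b 1) (hxa : LeftDvd x a) (hxb : LeftDvd x b) : x = 1 := by
  obtain ⟨y, hy⟩ := hab.2.2 x hxa hxb
  exact hunit x y hy

end CoprimeDivisors

theorem stmt_8_general {M : Type*} [CancelMonoid M] {G : Type u} [Group G]
    (hunit : ∀ a b : M, a * b = 1 → a = 1)
    (ι : M →* G)
    (hcc : ∀ a b d c : M, ι a * (ι b)⁻¹ * ι d * (ι c)⁻¹ = 1 → CentralCross a b d c) :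
    ∀ a b c : M, IsRightGcd a b 1 → IsLeftGcd b c 1 →
      (∃ d : M, ι a * (ι b)⁻¹ * ι c = ι d) → b = 1 := by
  intro a b c hab hbc ⟨d, hd⟩
  obtain ⟨x₁, x₂, x₃, x₄, ha, hb, hc, -⟩ := hcc a b c d (by rw [hd]; group)
  have hx₂ : x₂ = 1 := hab.eq_one_of_rightDvd' hunit ⟨x₁, ha.symm⟩ ⟨x₃, hb.symm⟩
  have hx₃ : x₃ = 1 := hbc.eq_one_of_leftDvd hunit ⟨x₂, hb.symm⟩ ⟨x₄, hc.symm⟩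
  rw [hb, hx₂, hx₃, one_mul]

theorem stmt_8 {M : Type*} [CancelMonoid M] {G : Type u} [Group G]
    (hunit : ∀ a b : M, a * b = 1 → a = 1)
    (hgcdL : ∀ a b : M, ∃ g, IsLeftGcd a b g)
    (hgcdR : ∀ a b : M, ∃ g, IsRightGcd a b g)
    (ι : M →* G)
    (hUniv : ∀ {H : Type u} [Group H] (f : M →* H), ∃! φ : G →* H, φ.comp ι = f)
    (hcc : ∀ a b d c : M, ι a * (ι b)⁻¹ * ι d * (ι c)⁻¹ = 1 → CentralCross a b d c) :
    ∀ a b c : M, IsRightGcd a b 1 → IsLeftGcd b c 1 →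
      (∃ d : M, ι a * (ι b)⁻¹ * ι c = ι d) → b = 1 :=
  stmt_8_general hunit ι hcc
end

section
/- Let M be a gcd-monoid embedding into its enveloping group U(M) (identify M with ι(M)), and assume every unital 4-multifraction admits a central cross, i.e., whenever x₀y₀⁻¹ = x₁y₁⁻¹ holds in U(M) for x₀,y₀,x₁,y₁ ∈ M, there exist x', y' ∈ M with x₀ = (x₀ ∧ y₀)x', y₀ = (x₀ ∧ y₀)y', x₁ = (x₁ ∧ y₁)x', y₁ = (x₁ ∧ y₁)y' (∧ the left gcd). Define g ≼ h in U(M) iff g⁻¹h ∈ M. Then any two elements g, h of U(M) admitting a common ≼-lower bound admit a greatest common ≼-lower bound. -/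
/-!
Let `f` be a common lower bound, `g = f a`, `h = f b`, and write `a = d a₁`, `b = d b₁` with
`d = a ∧ b`; the greatest common lower bound is `f d`. If `f₁ x₀ = g` and `f₁ x₁ = h`, then
`x₀ a₁⁻¹ = x₁ b₁⁻¹ = f₁⁻¹ f d`. A central cross for this equality shows `x₀ x₁⁻¹ = a₁ b₁⁻¹`, and a
central cross for the latter, where `a₁ ∧ b₁ = 1`, gives `x₀ = (x₀ ∧ x₁) a₁`; hence
`f₁ (x₀ ∧ x₁) = f d`.
-/

universe u

section CentralCrosses

variable {M G : Type*} [Group G]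

def HasCentralCrosses [Monoid M] (ι : M →* G) (lgcd : M → M → M) : Prop :=
  ∀ x₀ y₀ x₁ y₁ : M, ι x₀ * (ι y₀)⁻¹ = ι x₁ * (ι y₁)⁻¹ →
    ∃ x' y' : M, x₀ = lgcd x₀ y₀ * x' ∧ y₀ = lgcd x₀ y₀ * y' ∧
      x₁ = lgcd x₁ y₁ * x' ∧ y₁ = lgcd x₁ y₁ * y'

variable [Monoid M] {ι : M →* G} {lgcd : M → M → M} {x₀ y₀ x₁ y₁ : M}

theorem HasCentralCrosses.mul_inv_transpose (hcc : HasCentralCrosses ι lgcd)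
    (h : ι x₀ * (ι y₀)⁻¹ = ι x₁ * (ι y₁)⁻¹) :
    ι x₀ * (ι x₁)⁻¹ = ι y₀ * (ι y₁)⁻¹ := by
  obtain ⟨x', y', hx₀, hy₀, hx₁, hy₁⟩ := hcc x₀ y₀ x₁ y₁ h
  rw [congrArg ι hx₀, congrArg ι hy₀, congrArg ι hx₁, congrArg ι hy₁]
  simp only [map_mul]
  group

theorem HasCentralCrosses.eq_lgcd_mul_of_lgcd_eq_one (hcc : HasCentralCrosses ι lgcd)
    (h : ι x₀ * (ι y₀)⁻¹ = ι x₁ * (ι y₁)⁻¹) (h₁ : lgcd x₁ y₁ = 1) :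
    x₀ = lgcd x₀ y₀ * x₁ := by
  obtain ⟨x', -, hx₀, -, hx₁, -⟩ := hcc x₀ y₀ x₁ y₁ h
  rw [h₁, one_mul] at hx₁
  rwa [← hx₁] at hx₀

end CentralCrosses

theorem IsLeftGcd.gcd_cofactors_eq_one {M : Type*} [LeftCancelMonoid M]
    (hunit : ∀ a b : M, a * b = 1 → a = 1) {a b d a₁ b₁ e : M} (hd : IsLeftGcd a b d)
    (ha : d * a₁ = a) (hb : d * b₁ = b) (he : IsLeftGcd a₁ b₁ e) : e = 1 := by
  obtain ⟨⟨u, hu⟩, ⟨v, hv⟩, -⟩ := he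
  obtain ⟨w, hw⟩ := hd.2.2 (d * e) ⟨u, by rw [mul_assoc, hu, ha]⟩ ⟨v, by rw [mul_assoc, hv, hb]⟩
  exact hunit e w (mul_left_cancel (a := d) (by rw [← mul_assoc, hw, mul_one]))

theorem stmt_10_general {M : Type*} [CancelMonoid M] {G : Type u} [Group G]
    (hunit : ∀ a b : M, a * b = 1 → a = 1)
    (ι : M →* G)
    (lgcd : M → M → M) (hlgcd : ∀ a b : M, IsLeftGcd a b (lgcd a b))
    (hcc : ∀ x₀ y₀ x₁ y₁ : M, ι x₀ * (ι y₀)⁻¹ = ι x₁ * (ι y₁)⁻¹ →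
      ∃ x' y' : M, x₀ = lgcd x₀ y₀ * x' ∧ y₀ = lgcd x₀ y₀ * y' ∧
        x₁ = lgcd x₁ y₁ * x' ∧ y₁ = lgcd x₁ y₁ * y')
    (g h : G) (hlb : ∃ f : G, (∃ m : M, f * ι m = g) ∧ ∃ m : M, f * ι m = h) :
    ∃ f₀ : G, (∃ m : M, f₀ * ι m = g) ∧ (∃ m : M, f₀ * ι m = h) ∧
      ∀ f₁ : G, (∃ m : M, f₁ * ι m = g) → (∃ m : M, f₁ * ι m = h) →
        ∃ m : M, f₁ * ι m = f₀ := by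
  have hcc : HasCentralCrosses ι lgcd := hcc
  obtain ⟨f, ⟨a, rfl⟩, ⟨b, rfl⟩⟩ := hlb
  obtain ⟨⟨a₁, ha₁⟩, ⟨b₁, hb₁⟩, -⟩ := hlgcd a b
  have hcop : lgcd a₁ b₁ = 1 := (hlgcd a b).gcd_cofactors_eq_one hunit ha₁ hb₁ (hlgcd a₁ b₁)
  set f₀ := f * ι (lgcd a b)
  have hf₀a : f₀ * ι a₁ = f * ι a := by rw [mul_assoc, ← map_mul, ha₁]
  have hf₀b : f₀ * ι b₁ = f * ι b := by rw [mul_assoc, ← map_mul, hb₁]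
  refine ⟨f₀, ⟨a₁, hf₀a⟩, ⟨b₁, hf₀b⟩, ?_⟩
  rintro f₁ ⟨x₀, hx₀⟩ ⟨x₁, hx₁⟩
  have hquot : ∀ x y : M, f₁ * ι x = f₀ * ι y → ι x * (ι y)⁻¹ = f₁⁻¹ * f₀ := fun x y hxy => by
    rw [mul_inv_eq_iff_eq_mul, mul_assoc, ← hxy, inv_mul_cancel_left]
  have hx₀a₁ : x₀ = lgcd x₀ x₁ * a₁ := hcc.eq_lgcd_mul_of_lgcd_eq_one
    (hcc.mul_inv_transpose <| (hquot _ _ (hx₀.trans hf₀a.symm)).trans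
      (hquot _ _ (hx₁.trans hf₀b.symm)).symm) hcop
  refine ⟨lgcd x₀ x₁, mul_right_cancel (b := ι a₁) ?_⟩
  rw [mul_assoc, ← map_mul, ← hx₀a₁, hx₀, hf₀a]

theorem stmt_10 {M : Type*} [CancelMonoid M] {G : Type u} [Group G]
    (hunit : ∀ a b : M, a * b = 1 → a = 1)
    (hgcdR : ∀ a b : M, ∃ g, IsRightGcd a b g)
    (ι : M →* G)
    (hUniv : ∀ {H : Type u} [Group H] (f : M →* H), ∃! φ : G →* H, φ.comp ι = f)
    (hinj : Function.Injective ι)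
    (lgcd : M → M → M) (hlgcd : ∀ a b : M, IsLeftGcd a b (lgcd a b))
    (hcc : ∀ x₀ y₀ x₁ y₁ : M, ι x₀ * (ι y₀)⁻¹ = ι x₁ * (ι y₁)⁻¹ →
      ∃ x' y' : M, x₀ = lgcd x₀ y₀ * x' ∧ y₀ = lgcd x₀ y₀ * y' ∧
        x₁ = lgcd x₁ y₁ * x' ∧ y₁ = lgcd x₁ y₁ * y')
    (g h : G) (hlb : ∃ f : G, (∃ m : M, f * ι m = g) ∧ ∃ m : M, f * ι m = h) :
    ∃ f₀ : G, (∃ m : M, f₀ * ι m = g) ∧ (∃ m : M, f₀ * ι m = h) ∧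
      ∀ f₁ : G, (∃ m : M, f₁ * ι m = g) → (∃ m : M, f₁ * ι m = h) →
        ∃ m : M, f₁ * ι m = f₀ :=
  stmt_10_general hunit ι lgcd hlgcd hcc g h hlb
end

section
/- Let M be a gcd-monoid. Suppose a₁, a₂, a₃, a₄ ∈ M admit a central cross (x₁,x₂,x₃,x₄), i.e., a₁ = x₁x₂, a₂ = x₃x₂, a₃ = x₃x₄, a₄ = x₁x₄. Suppose x ∈ M left-divides a₃ and x and a₂ admit a common right multiple with a₂·x' = x ∨ a₂, and set b₁ = a₁x', x·b₂ = a₂x', x·b₃ = a₃, b₄ = a₄ (with b₂, b₃ ∈ M). Then (b₁, b₂, b₃, b₄) admits a central cross. -/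
universe u

/-!
Let `(x₁, x₂, x₃, x₄)` be the central cross of `(a₁, a₂, a₃, a₄)` and let `m = x ∨ x₃`, which exists
because `a₃ = x₃ x₄` is a common right multiple. Then `m` left-divides both `a₃` and `a₂ x' = x₃ x₂ x'`.
Writing `m = x c = x₃ d`, `m e = a₂ x'` and `m g = a₃`, left cancellation shows that
`(x₁ d, e, c, g)` is a central cross of `(b₁, b₂, b₃, b₄)`.
-/

theorem centralCross_of_common_multiple {M : Type*} [LeftCancelMonoid M]
    {x₁ x₂ x₃ x₄ x x' b₂ b₃ m : M} (hxm : LeftDvd x m) (hx₃m : LeftDvd x₃ m)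
    (hm₂ : LeftDvd m (x₃ * x₂ * x')) (hm₃ : LeftDvd m (x₃ * x₄))
    (hb₂ : x * b₂ = x₃ * x₂ * x') (hb₃ : x * b₃ = x₃ * x₄) :
    CentralCross (x₁ * x₂ * x') b₂ b₃ (x₁ * x₄) := by
  obtain ⟨c, rfl⟩ := hxm
  obtain ⟨d, hd⟩ := hx₃m
  obtain ⟨e, he⟩ := hm₂
  obtain ⟨g, hg⟩ := hm₃
  have hde : d * e = x₂ * x' :=
    mul_left_cancel (a := x₃) (by rw [← mul_assoc, hd, he, mul_assoc])
  have hdg : d * g = x₄ := mul_left_cancel (a := x₃) (by rw [← mul_assoc, hd, hg])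
  have hce : c * e = b₂ := mul_left_cancel (a := x) (by rw [← mul_assoc, he, hb₂])
  have hcg : c * g = b₃ := mul_left_cancel (a := x) (by rw [← mul_assoc, hg, hb₃])
  exact ⟨x₁ * d, e, c, g, by rw [mul_assoc, ← hde, mul_assoc], hce.symm, hcg.symm,
    by rw [← hdg, mul_assoc]⟩

theorem stmt_15_general {M : Type*} [CancelMonoid M]
    (hlcm : ∀ a b : M, (∃ c, LeftDvd a c ∧ LeftDvd b c) → ∃ m, IsRightLcm a b m)
    (a₁ a₂ a₃ a₄ x x' b₁ b₂ b₃ b₄ : M)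
    (ha : CentralCross a₁ a₂ a₃ a₄)
    (hx : LeftDvd x a₃)
    (hxl : IsRightLcm x a₂ (a₂ * x'))
    (hb₁ : b₁ = a₁ * x') (hb₂ : x * b₂ = a₂ * x') (hb₃ : x * b₃ = a₃)
    (hb₄ : b₄ = a₄) :
    CentralCross b₁ b₂ b₃ b₄ := by
  obtain ⟨x₁, x₂, x₃, x₄, rfl, rfl, rfl, rfl⟩ := ha
  subst hb₁ hb₄
  have hx₃a₃ : LeftDvd x₃ (x₃ * x₄) := ⟨x₄, rfl⟩
  obtain ⟨m, hxm, hx₃m, hm_least⟩ := hlcm x x₃ ⟨_, hx, hx₃a₃⟩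
  have hm₂ : LeftDvd m (x₃ * x₂ * x') := hm_least _ hxl.1 ⟨x₂ * x', (mul_assoc _ _ _).symm⟩
  exact centralCross_of_common_multiple hxm hx₃m hm₂ (hm_least _ hx hx₃a₃) hb₂ hb₃

theorem stmt_15 {M : Type*} [CancelMonoid M]
    (hunit : ∀ a b : M, a * b = 1 → a = 1)
    (hgcdL : ∀ a b : M, ∃ g, IsLeftGcd a b g)
    (hgcdR : ∀ a b : M, ∃ g, IsRightGcd a b g)
    (hlcm : ∀ a b : M, (∃ c, LeftDvd a c ∧ LeftDvd b c) → ∃ m, IsRightLcm a b m)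
    (a₁ a₂ a₃ a₄ x x' b₁ b₂ b₃ b₄ : M)
    (ha : CentralCross a₁ a₂ a₃ a₄)
    (hx : LeftDvd x a₃)
    (hxl : IsRightLcm x a₂ (a₂ * x'))
    (hb₁ : b₁ = a₁ * x') (hb₂ : x * b₂ = a₂ * x') (hb₃ : x * b₃ = a₃)
    (hb₄ : b₄ = a₄) :
    CentralCross b₁ b₂ b₃ b₄ :=
  stmt_15_general hlcm a₁ a₂ a₃ a₄ x x' b₁ b₂ b₃ b₄ ha hx hxl hb₁ hb₂ hb₃ hb₄
end
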